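/- Let H : [0,1] ∪ {∞} → [1/2,1] ∪ {∞} be H(t) = 1/(2−t) for t ∈ [0,1] and H(∞) = ∞. If μ solves the RDE associated with χ (i.e., ∫_{[0,t]} s dμ(s) = μ([0,t])² for all t ∈ [0,1]), then the pushforward of μ under H solves the RDE associated with γ; conversely, if μ' solves the γ-RDE then the pushforward of μ' under H⁻¹ solves the χ-RDE. -/

import Mathlib

/-!
Write `M = min X₁ X₂` for two independent samples of `ν`. As `τ` is uniform on `[0,1]`,
`P(γ[τ](X₁,X₂) ≤ a) = E[M; M ≤ a]` for `a ≤ 1`, so for `ν` carried by `[0,1] ∪ {∞}` the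
γ-RDE says that `ν` has density `m` with respect to the law of `M` on `[0,1]`. When `ν` has no
atom at `0` this is equivalent to the law of `M` having density `m⁻¹` with respect to `ν`, i.e.
`∫_{[0,c]} m⁻¹ dν = P(M ≤ c) = 2 ν[0,c] - ν[0,c]²` for `c ≤ 1`. Since `1 / H(x) = 2 - x`,
pushing this identity at `c = H(T)` back along `H` turns it into
`∫_{[0,T]} (2 - x) dμ = 2 μ[0,T] - μ[0,T]²`, which is the χ-RDE at `T`. For the converse, a
solution of the γ-RDE satisfies `ν[0,c] ≤ 2c ν[0,c]`, hence puts no mass below `1/2`, where `H`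
fails to invert `H⁻¹`.
-/

open MeasureTheory Set
open scoped ENNReal

/-- γ[t](x,y) on I = [0,1] ∪ {∞} ⊆ ℝ≥0∞: min x y if min x y > t, else ∞. -/
noncomputable def gammaMap (t : ℝ) (x y : ℝ≥0∞) : ℝ≥0∞ :=
  if ENNReal.ofReal t < min x y then min x y else ⊤

/-- The map H : [0,1] ∪ {∞} → [1/2,1] ∪ {∞}, H(t) = 1/(2−t), H(∞) = ∞. -/
noncomputable def Hmap : ℝ≥0∞ → ℝ≥0∞ :=
  fun x => if x = ⊤ then ⊤ else ENNReal.ofReal (1/(2 - x.toReal))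

/-- The inverse map H⁻¹ : [1/2,1] ∪ {∞} → [0,1] ∪ {∞}, H⁻¹(t) = 2 − 1/t, H⁻¹(∞) = ∞. -/
noncomputable def Hinv : ℝ≥0∞ → ℝ≥0∞ :=
  fun y => if y = ⊤ then ⊤ else ENNReal.ofReal (2 - 1/y.toReal)

lemma measurable_Hmap : Measurable Hmap :=
  Measurable.ite (measurableSet_singleton ⊤) measurable_const <| ENNReal.measurable_ofReal.comp <|
    measurable_const.div (measurable_const.sub ENNReal.measurable_toReal)

lemma measurable_Hinv : Measurable Hinv :=
  Measurable.ite (measurableSet_singleton ⊤) measurable_const <| ENNReal.measurable_ofReal.comp <|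
    measurable_const.sub (measurable_const.div ENNReal.measurable_toReal)

@[simp] lemma Hmap_top : Hmap ⊤ = ⊤ := if_pos rfl

@[simp] lemma Hinv_top : Hinv ⊤ = ⊤ := if_pos rfl

lemma Hmap_of_le_one {x : ℝ≥0∞} (hx : x ≤ 1) : Hmap x = (2 - x)⁻¹ := by
  have hx' : x.toReal ≤ 1 := ENNReal.toReal_le_of_le_ofReal zero_le_one (by simpa using hx)
  rw [Hmap, if_neg (ne_top_of_le_ne_top ENNReal.one_ne_top hx), one_div,
    ENNReal.ofReal_inv_of_pos (by linarith), ENNReal.ofReal_sub _ ENNReal.toReal_nonneg,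
    ENNReal.ofReal_toReal (ne_top_of_le_ne_top ENNReal.one_ne_top hx), ENNReal.ofReal_ofNat]

lemma Hinv_of_ne_zero {y : ℝ≥0∞} (h0 : y ≠ 0) (htop : y ≠ ⊤) : Hinv y = 2 - y⁻¹ := by
  rw [Hinv, if_neg htop, ENNReal.ofReal_sub _ (by positivity), one_div,
    ENNReal.ofReal_inv_of_pos (ENNReal.toReal_pos h0 htop), ENNReal.ofReal_toReal htop,
    ENNReal.ofReal_ofNat]

lemma half_le_Hmap {x : ℝ≥0∞} (hx : x ≤ 1) : 2⁻¹ ≤ Hmap x := by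
  rw [Hmap_of_le_one hx]
  exact ENNReal.inv_le_inv.2 tsub_le_self

lemma Hmap_le_one {x : ℝ≥0∞} (hx : x ≤ 1) : Hmap x ≤ 1 := by
  rw [Hmap_of_le_one hx, ENNReal.inv_le_one]
  refine ENNReal.le_sub_of_add_le_left (ne_top_of_le_ne_top ENNReal.one_ne_top hx) ?_
  calc x + 1 ≤ 1 + 1 := by gcongr
    _ = 2 := one_add_one_eq_two

lemma Hmap_ne_top {x : ℝ≥0∞} (hx : x ≤ 1) : Hmap x ≠ ⊤ :=
  ne_top_of_le_ne_top ENNReal.one_ne_top (Hmap_le_one hx)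

lemma Hmap_le_Hmap_iff {x y : ℝ≥0∞} (hx : x ≤ 1) (hy : y ≤ 1) : Hmap x ≤ Hmap y ↔ x ≤ y := by
  rw [Hmap_of_le_one hx, Hmap_of_le_one hy, ENNReal.inv_le_inv,
    ENNReal.sub_le_sub_iff_left (hx.trans one_le_two) ENNReal.ofNat_ne_top]

lemma Hinv_le_one {y : ℝ≥0∞} (h0 : y ≠ 0) (h1 : y ≤ 1) : Hinv y ≤ 1 := by
  rw [Hinv_of_ne_zero h0 (ne_top_of_le_ne_top ENNReal.one_ne_top h1)]
  refine tsub_le_iff_right.2 ?_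
  calc (2 : ℝ≥0∞) = 1 + 1 := one_add_one_eq_two.symm
    _ ≤ 1 + y⁻¹ := by gcongr; exact ENNReal.one_le_inv.2 h1

lemma Hmap_Hinv {y : ℝ≥0∞} (h0 : 2⁻¹ ≤ y) (h1 : y ≤ 1) : Hmap (Hinv y) = y := by
  have hy0 : y ≠ 0 := (lt_of_lt_of_le (by norm_num) h0).ne'
  rw [Hmap_of_le_one (Hinv_le_one hy0 h1),
    Hinv_of_ne_zero hy0 (ne_top_of_le_ne_top ENNReal.one_ne_top h1),
    ENNReal.sub_sub_cancel ENNReal.ofNat_ne_top (ENNReal.inv_le_iff_inv_le.1 h0), inv_inv]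

noncomputable def minLaw (ν : Measure ℝ≥0∞) : Measure ℝ≥0∞ :=
  (ν.prod ν).map fun q => min q.1 q.2

noncomputable def gammaLaw (ν : Measure ℝ≥0∞) : Measure ℝ≥0∞ :=
  Measure.map (fun p : ℝ × ℝ≥0∞ × ℝ≥0∞ => gammaMap p.1 p.2.1 p.2.2)
    ((volume.restrict (Icc (0:ℝ) 1)).prod (ν.prod ν))

lemma measurable_min_fst_snd : Measurable fun q : ℝ≥0∞ × ℝ≥0∞ => min q.1 q.2 :=
  measurable_fst.min measurable_snd

lemma measurable_gammaMap_uncurry :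
    Measurable fun p : ℝ × ℝ≥0∞ × ℝ≥0∞ => gammaMap p.1 p.2.1 p.2.2 :=
  have hmin : Measurable fun p : ℝ × ℝ≥0∞ × ℝ≥0∞ => min p.2.1 p.2.2 :=
    measurable_min_fst_snd.comp measurable_snd
  Measurable.ite (measurableSet_lt (ENNReal.measurable_ofReal.comp measurable_fst) hmin) hmin
    measurable_const

instance (ν : Measure ℝ≥0∞) [IsProbabilityMeasure ν] : IsProbabilityMeasure (minLaw ν) :=
  Measure.isProbabilityMeasure_map measurable_min_fst_snd.aemeasurable

instance (ν : Measure ℝ≥0∞) [IsProbabilityMeasure ν] : IsProbabilityMeasure (gammaLaw ν) :=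
  have : IsProbabilityMeasure (volume.restrict (Icc (0:ℝ) 1)) := ⟨by simp⟩
  Measure.isProbabilityMeasure_map measurable_gammaMap_uncurry.aemeasurable

lemma minLaw_apply_le (ν : Measure ℝ≥0∞) [IsProbabilityMeasure ν] {s : Set ℝ≥0∞}
    (hs : MeasurableSet s) : minLaw ν s ≤ 2 * ν s := by
  rw [minLaw, Measure.map_apply measurable_min_fst_snd hs, two_mul]
  calc (ν.prod ν) ((fun q : ℝ≥0∞ × ℝ≥0∞ => min q.1 q.2) ⁻¹' s)
      ≤ (ν.prod ν) (s ×ˢ univ ∪ univ ×ˢ s) := by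
        refine measure_mono fun q hq => ?_
        rcases min_choice q.1 q.2 with h | h
        · exact Or.inl ⟨by simpa [h] using hq, mem_univ _⟩
        · exact Or.inr ⟨mem_univ _, by simpa [h] using hq⟩
    _ ≤ ν s + ν s := by
        refine (measure_union_le _ _).trans_eq ?_
        rw [Measure.prod_prod, Measure.prod_prod, measure_univ, mul_one, one_mul]

lemma minLaw_apply_eq_zero (ν : Measure ℝ≥0∞) [IsProbabilityMeasure ν] {s : Set ℝ≥0∞}
    (hs : MeasurableSet s) (h : ν s = 0) : minLaw ν s = 0 :=
  le_antisymm ((minLaw_apply_le ν hs).trans_eq (by rw [h, mul_zero])) zero_le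

lemma minLaw_Iic_add_sq (ν : Measure ℝ≥0∞) [IsProbabilityMeasure ν] (c : ℝ≥0∞) :
    minLaw ν (Iic c) + ν (Iic c) ^ 2 = 2 * ν (Iic c) := by
  have hpre : (fun q : ℝ≥0∞ × ℝ≥0∞ => min q.1 q.2) ⁻¹' Iic c
      = Iic c ×ˢ univ ∪ univ ×ˢ Iic c := by
    ext q; simp
  have hinter : Iic c ×ˢ univ ∩ univ ×ˢ Iic c = Iic c ×ˢ Iic c := by simp [prod_inter_prod]
  rw [minLaw, Measure.map_apply measurable_min_fst_snd measurableSet_Iic, hpre, sq,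
    ← Measure.prod_prod, ← hinter,
    measure_union_add_inter _ (MeasurableSet.univ.prod measurableSet_Iic), Measure.prod_prod,
    Measure.prod_prod, measure_univ, mul_one, one_mul, two_mul]

lemma volume_restrict_Icc_setOf_ofReal_lt (m : ℝ≥0∞) :
    volume.restrict (Icc (0:ℝ) 1) {t | ENNReal.ofReal t < m} = min m 1 := by
  rcases eq_or_ne m ⊤ with rfl | hm
  · simp
  rw [Measure.restrict_congr_set Ico_ae_eq_Icc.symm, Measure.restrict_apply' measurableSet_Ico]
  have : {t : ℝ | ENNReal.ofReal t < m} ∩ Ico 0 1 = Ico 0 1 ∩ Iio m.toReal := by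
    ext t
    simp only [mem_inter_iff, mem_ofPred_eq, mem_Ico, mem_Iio]
    constructor
    · rintro ⟨h, h0, h1⟩; exact ⟨⟨h0, h1⟩, (ENNReal.ofReal_lt_iff_lt_toReal h0 hm).1 h⟩
    · rintro ⟨⟨h0, h1⟩, h⟩; exact ⟨(ENNReal.ofReal_lt_iff_lt_toReal h0 hm).2 h, h0, h1⟩
  rw [this, Ico_inter_Iio, Real.volume_Ico, sub_zero, ENNReal.ofReal_min, ENNReal.ofReal_one,
    ENNReal.ofReal_toReal hm, min_comm]

lemma gammaLaw_apply (ν : Measure ℝ≥0∞) [IsProbabilityMeasure ν] {s : Set ℝ≥0∞}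
    (hs : MeasurableSet s) (htop : ⊤ ∉ s) :
    gammaLaw ν s = ∫⁻ m in s, min m 1 ∂minLaw ν := by
  have hmem : ∀ t x y, gammaMap t x y ∈ s ↔ ENNReal.ofReal t < min x y ∧ min x y ∈ s := by
    intro t x y
    unfold gammaMap
    split_ifs with h <;> simp [h, htop]
  have hslice : ∀ q : ℝ≥0∞ × ℝ≥0∞,
      volume.restrict (Icc (0:ℝ) 1) {t | gammaMap t q.1 q.2 ∈ s}
        = s.indicator (fun m => min m 1) (min q.1 q.2) := by
    intro q
    by_cases hq : min q.1 q.2 ∈ s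
    · simp only [hmem, hq, and_true]
      rw [volume_restrict_Icc_setOf_ofReal_lt, indicator_of_mem hq]
    · simp [hmem, hq]
  rw [gammaLaw, Measure.map_apply measurable_gammaMap_uncurry hs,
    Measure.prod_apply_symm (measurable_gammaMap_uncurry hs), ← lintegral_indicator hs, minLaw,
    lintegral_map (f := s.indicator fun m => min m 1)
      ((measurable_id.min measurable_const).indicator hs) measurable_min_fst_snd]
  exact lintegral_congr hslice

lemma gammaLaw_Iic (ν : Measure ℝ≥0∞) [IsProbabilityMeasure ν] {a : ℝ≥0∞} (ha : a ≤ 1) :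
    gammaLaw ν (Iic a) = ∫⁻ m in Iic a, m ∂minLaw ν := by
  have htop : ⊤ ∉ Iic a := by simpa using ne_top_of_le_ne_top ENNReal.one_ne_top ha
  rw [gammaLaw_apply ν measurableSet_Iic htop]
  exact setLIntegral_congr_fun measurableSet_Iic fun m hm => min_eq_left (le_trans hm ha)

lemma gammaLaw_Ioo_one_top (ν : Measure ℝ≥0∞) [IsProbabilityMeasure ν] (h : ν (Ioo 1 ⊤) = 0) :
    gammaLaw ν (Ioo 1 ⊤) = 0 := by
  rw [gammaLaw_apply ν measurableSet_Ioo (by simp)]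
  exact setLIntegral_measure_zero _ _ (minLaw_apply_eq_zero ν measurableSet_Ioo h)

lemma measure_Iic_eq_measure_Iic_min_one {ρ : Measure ℝ≥0∞} (h : ρ (Ioo 1 ⊤) = 0) {a : ℝ≥0∞}
    (ha : a ≠ ⊤) : ρ (Iic a) = ρ (Iic (min a 1)) := by
  refine measure_congr ?_
  filter_upwards [measure_eq_zero_iff_ae_notMem.1 h] with x hx
  change (x ≤ a) = (x ≤ min a 1)
  rcases le_or_gt x 1 with hx1 | hx1
  · simp [hx1]
  · obtain rfl : x = ⊤ := by simpa [hx1] using hx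
    simp [ha]

lemma ext_of_Iic_of_Ioo_one_top {ρ₁ ρ₂ : Measure ℝ≥0∞} [IsProbabilityMeasure ρ₁]
    [IsProbabilityMeasure ρ₂] (h₁ : ρ₁ (Ioo 1 ⊤) = 0) (h₂ : ρ₂ (Ioo 1 ⊤) = 0)
    (h : ∀ a ≤ 1, ρ₁ (Iic a) = ρ₂ (Iic a)) : ρ₁ = ρ₂ := by
  refine Measure.ext_of_Iic _ _ fun a => ?_
  rcases eq_or_ne a ⊤ with rfl | ha
  · simp
  rw [measure_Iic_eq_measure_Iic_min_one h₁ ha, measure_Iic_eq_measure_Iic_min_one h₂ ha,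
    h _ (min_le_right _ _)]

lemma setLIntegral_Iic_eq_of_inv_density {ρ σ : Measure ℝ≥0∞} [IsFiniteMeasure σ]
    {f g : ℝ≥0∞ → ℝ≥0∞} (hf : Measurable f) (hg : Measurable g)
    (hfg : ∀ m ∈ Ioc 0 1, f m * g m = 1) (hρ : ρ {0} = 0)
    (h : ∀ a ≤ 1, ∫⁻ m in Iic a, f m ∂ρ = σ (Iic a)) {a : ℝ≥0∞} (ha : a ≤ 1) :
    ∫⁻ m in Iic a, g m ∂σ = ρ (Iic a) := by
  have hdens : σ.restrict (Iic 1) = (ρ.restrict (Iic 1)).withDensity f := by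
    refine Measure.ext_of_Iic _ _ fun b => ?_
    rw [withDensity_apply _ measurableSet_Iic, Measure.restrict_restrict measurableSet_Iic,
      Measure.restrict_apply measurableSet_Iic, Iic_inter_Iic, h _ inf_le_right]
  calc ∫⁻ m in Iic a, g m ∂σ = ∫⁻ m in Iic a, g m ∂σ.restrict (Iic 1) := by
        rw [Measure.restrict_restrict_of_subset (Iic_subset_Iic.2 ha)]
    _ = ∫⁻ m in Iic a, (f * g) m ∂ρ := by
        rw [hdens, setLIntegral_withDensity_eq_setLIntegral_mul _ hf hg measurableSet_Iic,
          Measure.restrict_restrict_of_subset (Iic_subset_Iic.2 ha)]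
    _ = ∫⁻ _ in Iic a, 1 ∂ρ := by
        refine setLIntegral_congr_fun_ae measurableSet_Iic ?_
        filter_upwards [measure_eq_zero_iff_ae_notMem.1 hρ] with m hm0 hma
        exact hfg m ⟨pos_iff_ne_zero.2 hm0, le_trans hma ha⟩
    _ = ρ (Iic a) := by simp

lemma inv_mul_self_of_mem_Ioc {m : ℝ≥0∞} (hm : m ∈ Ioc 0 1) : m⁻¹ * m = 1 :=
  ENNReal.inv_mul_cancel hm.1.ne' (ne_top_of_le_ne_top ENNReal.one_ne_top hm.2)

lemma gammaLaw_eq_self_of_density (ν : Measure ℝ≥0∞) [IsProbabilityMeasure ν]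
    (h₁ : ν (Ioo 1 ⊤) = 0) (h₀ : ν {0} = 0)
    (h : ∀ c ≤ 1, ∫⁻ m in Iic c, m⁻¹ ∂ν = minLaw ν (Iic c)) : gammaLaw ν = ν :=
  ext_of_Iic_of_Ioo_one_top (gammaLaw_Ioo_one_top ν h₁) h₁ fun _ ha => by
    rw [gammaLaw_Iic ν ha]
    exact setLIntegral_Iic_eq_of_inv_density measurable_inv measurable_id
      (fun _ hm => inv_mul_self_of_mem_Ioc hm) h₀ h ha

section GammaFixedPoint

variable {ν : Measure ℝ≥0∞} [IsProbabilityMeasure ν]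

lemma measure_Iic_eq_zero_of_gammaLaw_eq (hγ : gammaLaw ν = ν) {c : ℝ≥0∞} (hc : c < 2⁻¹) :
    ν (Iic c) = 0 := by
  have hc2 : 2 * c < 1 :=
    calc 2 * c < 2 * 2⁻¹ := by gcongr; simp
      _ = 1 := ENNReal.mul_inv_cancel two_ne_zero ENNReal.ofNat_ne_top
  have hc1 : c ≤ 1 := hc.le.trans (by norm_num)
  have hle : ν (Iic c) ≤ 2 * c * ν (Iic c) :=
    calc ν (Iic c) = ∫⁻ m in Iic c, m ∂minLaw ν := by rw [← gammaLaw_Iic ν hc1, hγ]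
      _ ≤ ∫⁻ _ in Iic c, c ∂minLaw ν := setLIntegral_mono measurable_const fun _ hm => hm
      _ = c * minLaw ν (Iic c) := by rw [setLIntegral_const, mul_comm]
      _ ≤ c * (2 * ν (Iic c)) := by gcongr; exact minLaw_apply_le ν measurableSet_Iic
      _ = 2 * c * ν (Iic c) := by ring
  by_contra h0
  exact (hle.trans_lt <| by simpa using ENNReal.mul_lt_mul_left h0 (measure_ne_top ν _) hc2).false

lemma measure_Iio_half_eq_zero_of_gammaLaw_eq (hγ : gammaLaw ν = ν) : ν (Iio 2⁻¹) = 0 := by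
  obtain ⟨u, -, hu, hlim⟩ := exists_seq_strictMono_tendsto' (show (0 : ℝ≥0∞) < 2⁻¹ by simp)
  rw [← iUnion_Iic_eq_Iio_of_lt_of_tendsto (fun n => (hu n).2) hlim]
  exact measure_iUnion_null fun n => measure_Iic_eq_zero_of_gammaLaw_eq hγ (hu n).2

lemma setLIntegral_Iic_inv_of_gammaLaw_eq (hγ : gammaLaw ν = ν) {c : ℝ≥0∞} (hc : c ≤ 1) :
    ∫⁻ m in Iic c, m⁻¹ ∂ν = minLaw ν (Iic c) := by
  have h₀ : ν {0} = 0 := by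
    rw [← show Iic (0 : ℝ≥0∞) = {0} by ext; simp]
    exact measure_Iic_eq_zero_of_gammaLaw_eq hγ (by simp)
  refine setLIntegral_Iic_eq_of_inv_density measurable_id measurable_inv
    (fun _ hm => by rw [id, mul_comm, inv_mul_self_of_mem_Ioc hm]) ?_ (fun a ha => ?_) hc
  · exact minLaw_apply_eq_zero ν (measurableSet_singleton 0) h₀
  · change ∫⁻ m in Iic a, m ∂minLaw ν = ν (Iic a)
    rw [← gammaLaw_Iic ν ha, hγ]

end GammaFixedPoint

def SolvesChiRDE (μ : Measure ℝ≥0∞) : Prop :=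
  ∀ T ≤ 1, ∫⁻ x in Iic T, x ∂μ = μ (Iic T) ^ 2

lemma solvesChiRDE_iff {μ : Measure ℝ≥0∞} :
    SolvesChiRDE μ ↔ ∀ t ∈ Icc (0:ℝ) 1,
      ∫⁻ s in Icc 0 (ENNReal.ofReal t), s ∂μ = μ (Icc 0 (ENNReal.ofReal t)) ^ 2 := by
  have hIcc : ∀ T : ℝ≥0∞, Icc 0 T = Iic T := fun T => by ext; simp
  simp only [hIcc]
  refine ⟨fun h t ht => h _ (ENNReal.ofReal_le_one.2 ht.2), fun h T hT => ?_⟩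
  have hT' : T ≠ ⊤ := ne_top_of_le_ne_top ENNReal.one_ne_top hT
  have hT1 : T.toReal ≤ 1 := ENNReal.toReal_le_of_le_ofReal zero_le_one (by simpa using hT)
  simpa [ENNReal.ofReal_toReal hT'] using h T.toReal ⟨ENNReal.toReal_nonneg, hT1⟩

lemma ENNReal.eq_iff_eq_of_add_eq_add {a b c d : ℝ≥0∞} (h : a + b = c + d) (hne : a + b ≠ ⊤) :
    a = c ↔ b = d := by
  constructor
  · rintro rfl
    exact (ENNReal.add_right_inj (ENNReal.add_ne_top.1 hne).1).1 h
  · rintro rfl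
    exact (ENNReal.add_left_inj (ENNReal.add_ne_top.1 hne).2).1 h

lemma solvesChiRDE_at_iff (μ : Measure ℝ≥0∞) [IsProbabilityMeasure μ] (hμ : μ (Ioo 1 ⊤) = 0)
    {T : ℝ≥0∞} (hT : T ≤ 1) :
    ∫⁻ x in Iic T, x ∂μ = μ (Iic T) ^ 2 ↔
      ∫⁻ m in Iic (Hmap T), m⁻¹ ∂μ.map Hmap = minLaw (μ.map Hmap) (Iic (Hmap T)) := by
  have hpre : Hmap ⁻¹' Iic (Hmap T) =ᵐ[μ] Iic T := by
    filter_upwards [measure_eq_zero_iff_ae_notMem.1 hμ] with x hx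
    change (Hmap x ≤ Hmap T) = (x ≤ T)
    rcases le_or_gt x 1 with hx1 | hx1
    · rw [Hmap_le_Hmap_iff hx1 hT]
    · obtain rfl : x = ⊤ := by simpa [hx1] using hx
      simp [Hmap_ne_top hT, ne_top_of_le_ne_top ENNReal.one_ne_top hT]
  have hF : μ.map Hmap (Iic (Hmap T)) = μ (Iic T) := by
    rw [Measure.map_apply measurable_Hmap measurableSet_Iic, measure_congr hpre]
  have hB : ∫⁻ m in Iic (Hmap T), m⁻¹ ∂μ.map Hmap = ∫⁻ x in Iic T, (2 - x) ∂μ := by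
    rw [setLIntegral_map measurableSet_Iic measurable_inv measurable_Hmap,
      setLIntegral_congr hpre]
    exact setLIntegral_congr_fun measurableSet_Iic fun x hx => by
      rw [Hmap_of_le_one (le_trans hx hT), inv_inv]
  have hsum : ∫⁻ x in Iic T, (2 - x) ∂μ + ∫⁻ x in Iic T, x ∂μ = 2 * μ (Iic T) := by
    rw [← lintegral_add_right _ measurable_id', setLIntegral_congr_fun measurableSet_Iic
      fun x hx => tsub_add_cancel_of_le (le_trans hx (hT.trans one_le_two)), setLIntegral_const]
  have : IsProbabilityMeasure (μ.map Hmap) :=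
    Measure.isProbabilityMeasure_map measurable_Hmap.aemeasurable
  have hL := minLaw_Iic_add_sq (μ.map Hmap) (Hmap T)
  rw [hF] at hL
  rw [hB]
  refine (ENNReal.eq_iff_eq_of_add_eq_add (hsum.trans hL.symm) ?_).symm
  rw [hsum]
  exact ENNReal.mul_ne_top ENNReal.ofNat_ne_top (measure_ne_top μ _)

lemma ae_map_Hmap_mem (μ : Measure ℝ≥0∞) (hμ : μ (Ioo 1 ⊤) = 0) :
    ∀ᵐ y ∂μ.map Hmap, y ∈ Icc 2⁻¹ 1 ∪ {⊤} := by
  refine (ae_map_iff measurable_Hmap.aemeasurable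
    (measurableSet_Icc.union (measurableSet_singleton _))).2 ?_
  filter_upwards [measure_eq_zero_iff_ae_notMem.1 hμ] with x hx
  rcases le_or_gt x 1 with hx1 | hx1
  · exact Or.inl ⟨half_le_Hmap hx1, Hmap_le_one hx1⟩
  · obtain rfl : x = ⊤ := by simpa [hx1] using hx
    exact Or.inr (by simp)

theorem gammaLaw_map_Hmap (μ : Measure ℝ≥0∞) [IsProbabilityMeasure μ] (hμ : μ (Ioo 1 ⊤) = 0)
    (hχ : SolvesChiRDE μ) : gammaLaw (μ.map Hmap) = μ.map Hmap := by
  have : IsProbabilityMeasure (μ.map Hmap) :=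
    Measure.isProbabilityMeasure_map measurable_Hmap.aemeasurable
  have hnull : ∀ s, (∀ y ∈ s, y ∉ Icc 2⁻¹ 1 ∪ {⊤}) → μ.map Hmap s = 0 := fun s hs =>
    measure_eq_zero_iff_ae_notMem.2 ((ae_map_Hmap_mem μ hμ).mono fun y hy hys => hs y hys hy)
  have hlow : ∀ c < 2⁻¹, μ.map Hmap (Iic c) = 0 := by
    refine fun c hc => hnull _ fun y (hyc : y ≤ c) hy => ?_
    rcases hy with hy | rfl
    · exact (hy.1.trans hyc).not_gt hc
    · exact (top_le_iff.1 hyc ▸ hc).not_ge le_top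
  refine gammaLaw_eq_self_of_density _ (hnull _ ?_) (hnull _ ?_) fun c hc => ?_
  · rintro y ⟨hy1, hytop⟩ (hy | rfl)
    exacts [hy.2.not_gt hy1, hytop.false]
  · rintro y rfl (hy | hy) <;> simp_all
  by_cases hc2 : c < 2⁻¹
  · rw [setLIntegral_measure_zero _ _ (hlow c hc2),
      minLaw_apply_eq_zero _ measurableSet_Iic (hlow c hc2)]
  have hc0 : c ≠ 0 := fun h => hc2 (h ▸ by simp)
  rw [← Hmap_Hinv (not_lt.1 hc2) hc]
  exact (solvesChiRDE_at_iff μ hμ (Hinv_le_one hc0 hc)).1 (hχ _ (Hinv_le_one hc0 hc))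

theorem solvesChiRDE_map_Hinv (ν : Measure ℝ≥0∞) [IsProbabilityMeasure ν]
    (h₁ : ν (Ioo 1 ⊤) = 0) (hγ : gammaLaw ν = ν) : SolvesChiRDE (ν.map Hinv) := by
  have : IsProbabilityMeasure (ν.map Hinv) :=
    Measure.isProbabilityMeasure_map measurable_Hinv.aemeasurable
  have hsupp : ∀ᵐ y ∂ν, y ∈ Icc 2⁻¹ 1 ∪ {⊤} := by
    have hhalf := measure_Iio_half_eq_zero_of_gammaLaw_eq hγ
    filter_upwards [measure_eq_zero_iff_ae_notMem.1 h₁, measure_eq_zero_iff_ae_notMem.1 hhalf]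
      with y hy₁ hy₂
    rcases le_or_gt y 1 with hy | hy
    · exact Or.inl ⟨not_lt.1 hy₂, hy⟩
    · exact Or.inr (by simpa [hy] using hy₁)
  have hmap : (ν.map Hinv).map Hmap = ν := by
    rw [Measure.map_map measurable_Hmap measurable_Hinv]
    conv_rhs => rw [← Measure.map_id (μ := ν)]
    refine Measure.map_congr (hsupp.mono fun y hy => ?_)
    rcases hy with hy | rfl
    exacts [Hmap_Hinv hy.1 hy.2, by simp]
  have hμ : ν.map Hinv (Ioo 1 ⊤) = 0 := by
    rw [Measure.map_apply measurable_Hinv measurableSet_Ioo]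
    refine measure_eq_zero_iff_ae_notMem.2 (hsupp.mono fun y hy hy' => ?_)
    rcases hy with hy | rfl
    · exact (Hinv_le_one (lt_of_lt_of_le (by simp) hy.1).ne' hy.2).not_gt hy'.1
    · simp at hy'
  intro T hT
  rw [solvesChiRDE_at_iff _ hμ hT, hmap]
  exact setLIntegral_Iic_inv_of_gammaLaw_eq hγ (Hmap_le_one hT)

/-- If μ solves the χ-RDE (equivalently ∫_{[0,t]} s dμ(s) = μ([0,t])² for all t ∈ [0,1]),
then the pushforward of μ under H solves the γ-RDE; conversely, if μ' solves the γ-RDE,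
then the pushforward of μ' under H⁻¹ solves the χ-RDE. -/
theorem stmt9 :
    (∀ μ : Measure ℝ≥0∞, IsProbabilityMeasure μ →
      μ {x : ℝ≥0∞ | 1 < x ∧ x ≠ ⊤} = 0 →
      (∀ t ∈ Set.Icc (0:ℝ) 1,
        ∫⁻ s in Set.Icc 0 (ENNReal.ofReal t), s ∂μ
          = (μ (Set.Icc 0 (ENNReal.ofReal t)))^2) →
      Measure.map (fun p : ℝ × ℝ≥0∞ × ℝ≥0∞ => gammaMap p.1 p.2.1 p.2.2)
        ((volume.restrict (Set.Icc (0:ℝ) 1)).prod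
          ((Measure.map Hmap μ).prod (Measure.map Hmap μ)))
        = Measure.map Hmap μ)
    ∧ (∀ μ' : Measure ℝ≥0∞, IsProbabilityMeasure μ' →
        μ' {x : ℝ≥0∞ | 1 < x ∧ x ≠ ⊤} = 0 →
        (Measure.map (fun p : ℝ × ℝ≥0∞ × ℝ≥0∞ => gammaMap p.1 p.2.1 p.2.2)
          ((volume.restrict (Set.Icc (0:ℝ) 1)).prod (μ'.prod μ')) = μ') →
        ∀ t ∈ Set.Icc (0:ℝ) 1,
          ∫⁻ s in Set.Icc 0 (ENNReal.ofReal t), s ∂(Measure.map Hinv μ')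
            = ((Measure.map Hinv μ') (Set.Icc 0 (ENNReal.ofReal t)))^2) := by
  have hIoo : {x : ℝ≥0∞ | 1 < x ∧ x ≠ ⊤} = Ioo 1 ⊤ := by ext; simp [lt_top_iff_ne_top]
  refine ⟨fun μ _ hμ hχ => ?_, fun ν _ hν hγ => ?_⟩
  · rw [hIoo] at hμ
    exact gammaLaw_map_Hmap μ hμ (solvesChiRDE_iff.2 hχ)
  · rw [hIoo] at hν
    exact solvesChiRDE_iff.1 (solvesChiRDE_map_Hinv ν hν hγ)
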